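/- arXiv:2309.13246 — 9 statements merged into one kernel-verified Lean document; each statement's English description precedes it below -/
import Mathlib

section
/- Let f : ℝ^m → ℝ be individually monotonic with respect to feature α. Then the Baseline Shapley attribution of feature α preserves demand individual monotonicity: for every baseline x' ∈ ℝ^m, every explicand x ∈ ℝ^m, and every c > 0, letting x* agree with x in all coordinates except x*_α = x_α + c, one has BS_α(x*, x', f) ≥ BS_α(x, x', f). -/
/-- The Baseline Shapley attribution of feature `i` for a model `f` on `m` features,
explicand `x` and baseline `x'`:
`BS_i(x, x', f) = Σ_{S ⊆ {1,…,m}∖{i}} [|S|! (m − |S| − 1)! / m!] · (v(S ∪ {i}) − v(S))`,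
where `v(S) = f(y)` with `y_j = x_j` for `j ∈ S` and `y_j = x'_j` otherwise. -/
noncomputable def BS (m : ℕ) (f : (Fin m → ℝ) → ℝ) (x x' : Fin m → ℝ) (i : Fin m) : ℝ :=
  ∑ S ∈ (Finset.univ.erase i).powerset,
    ((Nat.factorial S.card * Nat.factorial (m - S.card - 1) : ℝ) / Nat.factorial m) *
      (f (fun j => if j ∈ insert i S then x j else x' j) -
       f (fun j => if j ∈ S then x j else x' j))

/-- If `f` is individually monotonic with respect to feature `α`, then Baseline Shapley
preserves demand individual monotonicity: for every baseline `x'`, explicand `x`, and `c > 0`,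
letting `x*` agree with `x` except `x*_α = x_α + c`, one has `BS_α(x*, x', f) ≥ BS_α(x, x', f)`. -/
theorem bshap_preserves_demand_individual_monotonicity
    (m : ℕ) (f : (Fin m → ℝ) → ℝ) (α : Fin m)
    (hmono : ∀ x xs : Fin m → ℝ,
      (∀ i : Fin m, i ≠ α → x i = xs i) → x α ≤ xs α → f x ≤ f xs)
    (x x' : Fin m → ℝ) (c : ℝ) (hc : 0 < c) :
    BS m f x x' α ≤ BS m f (Function.update x α (x α + c)) x' α := by
  unfold BS
  apply Finset.sum_le_sum
  intro S hS
  have hαS : α ∉ S := by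
    intro h
    have := Finset.mem_powerset.mp hS h
    exact (Finset.mem_erase.mp this).1 rfl
  have hsame : (fun j => if j ∈ S then x j else x' j) =
      (fun j => if j ∈ S then Function.update x α (x α + c) j else x' j) := by
    funext j
    by_cases hj : j ∈ S
    · simp only [hj, if_pos]
      rw [Function.update_of_ne (by rintro rfl; exact hαS hj)]
    · simp [hj]
  have hle : f (fun j => if j ∈ insert α S then x j else x' j) ≤
      f (fun j => if j ∈ insert α S then Function.update x α (x α + c) j else x' j) := by
    apply hmono
    · intro i hi
      by_cases h : i ∈ insert α S
      · simp only [h, if_pos]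
        rw [Function.update_of_ne hi]
      · simp [h]
    · simp [Function.update_self]
      linarith
  have hcoef : (0:ℝ) ≤ (Nat.factorial S.card * Nat.factorial (m - S.card - 1) : ℝ) / Nat.factorial m :=
    div_nonneg (by positivity) (by positivity)
  rw [← hsame]
  exact mul_le_mul_of_nonneg_left (by linarith) hcoef
end

section
/- Let f : ℝ^m → ℝ be individually monotonic with respect to feature α. Then Baseline Shapley preserves average individual monotonicity: for every baseline x' ∈ ℝ^m and every explicand x ∈ ℝ^m with x_i ≥ x'_i for all i, one has BS_α(x, x', f) ≥ 0. -/
/-- If `f` is individually monotonic with respect to feature `α`, then Baseline Shapley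
preserves average individual monotonicity: for every baseline `x'` and explicand `x` with
`x_i ≥ x'_i` for all `i`, one has `BS_α(x, x', f) ≥ 0`. -/
theorem bshap_preserves_average_individual_monotonicity
    (m : ℕ) (f : (Fin m → ℝ) → ℝ) (α : Fin m)
    (hmono : ∀ x xs : Fin m → ℝ,
      (∀ i : Fin m, i ≠ α → x i = xs i) → x α ≤ xs α → f x ≤ f xs)
    (x x' : Fin m → ℝ) (hge : ∀ i : Fin m, x' i ≤ x i) :
    0 ≤ BS m f x x' α := by
  unfold BS
  apply Finset.sum_nonneg
  intro S hS
  rw [Finset.mem_powerset] at hS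
  have hαS : α ∉ S := fun h => (Finset.mem_erase.mp (hS h)).1 rfl
  apply mul_nonneg
  · apply div_nonneg <;> positivity
  · rw [sub_nonneg]
    apply hmono
    · intro i hi
      simp [Finset.mem_insert, hi]
    · simp only [Finset.mem_insert, hαS, if_pos (Or.inl rfl)]
      simp [hαS, hge α]
end

section
/- Let f : ℝ^m → ℝ be continuously differentiable and individually monotonic with respect to feature α. Then Integrated Gradients preserves average individual monotonicity: for every baseline x' ∈ ℝ^m and every explicand x ∈ ℝ^m with x_i ≥ x'_i for all i, one has IG_α(x, x', f) ≥ 0. -/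
/-- The Integrated Gradients attribution of feature `i` at explicand `x` with baseline `x'`
for a model `f`: `IG_i(x, x', f) = (x_i − x'_i) · ∫_0^1 (∂f/∂x_i)(x' + t(x − x')) dt`. -/
noncomputable def IG (m : ℕ) (f : (Fin m → ℝ) → ℝ) (x x' : Fin m → ℝ) (i : Fin m) : ℝ :=
  (x i - x' i) * ∫ t in (0:ℝ)..1,
    deriv (fun s : ℝ => f (Function.update (x' + t • (x - x')) i s)) ((x' + t • (x - x')) i)

lemma monotone_deriv_nonneg {g : ℝ → ℝ} (hg : Monotone g) (a : ℝ) : 0 ≤ deriv g a := by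
  by_cases hd : DifferentiableAt ℝ g a
  · have h := hd.hasDerivAt
    rw [hasDerivAt_iff_tendsto_slope] at h
    refine le_of_tendsto_of_tendsto tendsto_const_nhds h ?_
    filter_upwards [self_mem_nhdsWithin] with z hz
    rcases lt_or_gt_of_ne (Ne.symm hz) with hlt | hlt
    · have : g a ≤ g z := hg hlt.le
      have : (g z - g a) / (z - a) ≥ 0 := div_nonneg (by linarith) (by linarith)
      simpa [slope_def_field] using this
    · have hz' : g z ≤ g a := hg hlt.le
      have : (g z - g a) / (z - a) = (g a - g z) / (a - z) := by
        rw [div_eq_div_iff (by linarith) (by linarith)]; ring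
      have h2 : (g z - g a) / (z - a) ≥ 0 := by
        rw [this]; exact div_nonneg (by linarith) (by linarith)
      simpa [slope_def_field] using h2
  · simp [deriv_zero_of_not_differentiableAt hd]

/-- If `f` is continuously differentiable and individually monotonic with respect to
feature `α`, then Integrated Gradients preserves average individual monotonicity:
for every baseline `x'` and explicand `x` with `x_i ≥ x'_i` for all `i`,
one has `IG_α(x, x', f) ≥ 0`. -/
theorem ig_preserves_average_individual_monotonicity
    (m : ℕ) (f : (Fin m → ℝ) → ℝ) (α : Fin m)
    (hf : ContDiff ℝ 1 f)
    (hmono : ∀ x xs : Fin m → ℝ,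
      (∀ i : Fin m, i ≠ α → x i = xs i) → x α ≤ xs α → f x ≤ f xs)
    (x x' : Fin m → ℝ) (hge : ∀ i : Fin m, x' i ≤ x i) :
    0 ≤ IG m f x x' α := by
  unfold IG
  apply mul_nonneg (by linarith [hge α])
  apply intervalIntegral.integral_nonneg (by norm_num)
  intro t _
  apply monotone_deriv_nonneg
  intro s s' hss
  apply hmono
  · intro i hi
    simp [Function.update_of_ne hi]
  · simpa using hss
end

section
/- Let f : ℝ^m → ℝ be strongly pairwise monotonic with respect to feature β over feature γ (β ≠ γ). Then for every x ∈ ℝ^m at which both partial derivatives ∂f/∂x_β(x) and ∂f/∂x_γ(x) exist, one has ∂f/∂x_β(x) ≥ ∂f/∂x_γ(x). -/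
open Filter Topology

theorem HasDerivAt.le_of_eventually_le_nhdsGT {u v : ℝ → ℝ} {a du dv : ℝ}
    (hu : HasDerivAt u du a) (hv : HasDerivAt v dv a) (heq : u a = v a)
    (hle : ∀ᶠ t in 𝓝[>] a, u t ≤ v t) : du ≤ dv := by
  have hslope : Tendsto (slope (v - u) a) (𝓝[>] a) (𝓝 (dv - du)) :=
    (hasDerivAt_iff_tendsto_slope.1 (hv.sub hu)).mono_left (nhdsGT_le_nhdsNE a)
  have hnonneg : ∀ᶠ t in 𝓝[>] a, 0 ≤ slope (v - u) a t := by
    filter_upwards [hle, self_mem_nhdsWithin] with t ht hat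
    rw [slope_def_field, Pi.sub_apply, Pi.sub_apply, heq, sub_self, sub_zero]
    exact div_nonneg (sub_nonneg.2 ht) (sub_nonneg.2 (le_of_lt hat))
  exact sub_nonneg.1 (ge_of_tendsto hslope hnonneg)

theorem strong_pairwise_mono_partial_deriv_le_general
    (m : ℕ) (f : (Fin m → ℝ) → ℝ) (β γ : Fin m)
    (hmono : ∀ (x : Fin m → ℝ) (c : ℝ), 0 < c →
      f (Function.update x γ (x γ + c)) ≤ f (Function.update x β (x β + c)))
    (x : Fin m → ℝ) (dβ dγ : ℝ)
    (hdβ : HasDerivAt (fun s : ℝ => f (Function.update x β s)) dβ (x β))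
    (hdγ : HasDerivAt (fun s : ℝ => f (Function.update x γ s)) dγ (x γ)) :
    dγ ≤ dβ := by
  have hshift : ∀ (i : Fin m) (d : ℝ), HasDerivAt (fun s => f (Function.update x i s)) d (x i) →
      HasDerivAt (fun c => f (Function.update x i (x i + c))) d 0 := fun i d hd =>
    HasDerivAt.comp_const_add (x i) 0 (by rwa [add_zero])
  refine (hshift γ dγ hdγ).le_of_eventually_le_nhdsGT (hshift β dβ hdβ) ?_ ?_
  · simp only [add_zero, Function.update_eq_self]
  · filter_upwards [self_mem_nhdsWithin] with c hc using hmono x c hc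

/-- If `f : ℝ^m → ℝ` is strongly pairwise monotonic with respect to feature `β` over
feature `γ` (`β ≠ γ`), then for every `x` at which both partial derivatives
`∂f/∂x_β(x)` and `∂f/∂x_γ(x)` exist, one has `∂f/∂x_β(x) ≥ ∂f/∂x_γ(x)`. -/
theorem strong_pairwise_mono_partial_deriv_le
    (m : ℕ) (f : (Fin m → ℝ) → ℝ) (β γ : Fin m) (hβγ : β ≠ γ)
    (hmono : ∀ (x : Fin m → ℝ) (c : ℝ), 0 < c →
      f (Function.update x γ (x γ + c)) ≤ f (Function.update x β (x β + c)))
    (x : Fin m → ℝ) (dβ dγ : ℝ)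
    (hdβ : HasDerivAt (fun s : ℝ => f (Function.update x β s)) dβ (x β))
    (hdγ : HasDerivAt (fun s : ℝ => f (Function.update x γ s)) dγ (x γ)) :
    dγ ≤ dβ :=
  strong_pairwise_mono_partial_deriv_le_general m f β γ hmono x dβ dγ hdβ hdγ
end

section
/- Let f : ℝ^m → ℝ be continuously differentiable and weakly pairwise monotonic with respect to feature β over feature γ (β ≠ γ). Then Integrated Gradients with the zero baseline preserves average weak pairwise monotonicity: for every explicand x ∈ ℝ^m with x_β = x_γ > 0, one has (1/x_β) · IG_β(x, 0, f) ≥ (1/x_γ) · IG_γ(x, 0, f), i.e. IG_β(x, 0, f) ≥ IG_γ(x, 0, f). -/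
/-!
Along the ray `t ↦ t • x` the coordinates `β` and `γ` stay equal, so at every point of the ray
weak pairwise monotonicity compares the one-sided difference quotients of `f` in the directions
`e_β` and `e_γ`, hence the partial derivatives `∂_γ f ≤ ∂_β f`. Integrating over `t ∈ [0, 1]`
gives `IG_γ / x_γ ≤ IG_β / x_β`.
-/

open Function Filter Topology

section PartialDerivative

variable {𝕜 ι F : Type*} [NontriviallyNormedField 𝕜] [Fintype ι] [DecidableEq ι]
  [NormedAddCommGroup F] [NormedSpace 𝕜 F]

theorem HasFDerivAt.hasDerivAt_comp_update {f : (ι → 𝕜) → F} {f' : (ι → 𝕜) →L[𝕜] F} {y : ι → 𝕜}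
    (hf : HasFDerivAt f f' y) (i : ι) :
    HasDerivAt (fun s ↦ f (update y i s)) (f' (Pi.single i 1)) (y i) := by
  rw [← update_eq_self i y] at hf
  exact hf.comp_hasDerivAt (y i) (hasDerivAt_update y i (y i))

theorem deriv_comp_update_eq_fderiv {f : (ι → 𝕜) → F} {y : ι → 𝕜}
    (hf : DifferentiableAt 𝕜 f y) (i : ι) :
    deriv (fun s ↦ f (update y i s)) (y i) = fderiv 𝕜 f y (Pi.single i 1) :=
  (hf.hasFDerivAt.hasDerivAt_comp_update i).deriv

end PartialDerivative

theorem le_of_hasDerivAt_of_eq_of_le_right {φ ψ : ℝ → ℝ} {a d e : ℝ}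
    (hφ : HasDerivAt φ d a) (hψ : HasDerivAt ψ e a) (heq : φ a = ψ a)
    (hle : ∀ c, 0 < c → φ (a + c) ≤ ψ (a + c)) : d ≤ e := by
  refine le_of_tendsto_of_tendsto hφ.tendsto_slope_zero_right hψ.tendsto_slope_zero_right ?_
  filter_upwards [self_mem_nhdsWithin] with c (hc : 0 < c)
  simp only [smul_eq_mul, heq]
  gcongr
  exact hle c hc

def WeaklyPairwiseMonotone {ι : Type*} [DecidableEq ι] (f : (ι → ℝ) → ℝ) (β γ : ι) : Prop :=
  ∀ (x : ι → ℝ) (c : ℝ), x β = x γ → 0 < c →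
    f (update x γ (x γ + c)) ≤ f (update x β (x β + c))

theorem WeaklyPairwiseMonotone.fderiv_single_le {ι : Type*} [Fintype ι] [DecidableEq ι]
    {f : (ι → ℝ) → ℝ} {β γ : ι} (hmono : WeaklyPairwiseMonotone f β γ) {y : ι → ℝ}
    (hf : DifferentiableAt ℝ f y) (hy : y β = y γ) :
    fderiv ℝ f y (Pi.single γ 1) ≤ fderiv ℝ f y (Pi.single β 1) := by
  have hβ := hf.hasFDerivAt.hasDerivAt_comp_update β
  rw [hy] at hβ
  refine le_of_hasDerivAt_of_eq_of_le_right (hf.hasFDerivAt.hasDerivAt_comp_update γ) hβ ?_ ?_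
  · rw [update_eq_self, ← hy, update_eq_self]
  · intro c hc
    simpa only [hy] using hmono y c hy hc

theorem IG_eq_integral_fderiv {m : ℕ} {f : (Fin m → ℝ) → ℝ} (hf : Differentiable ℝ f)
    (x x' : Fin m → ℝ) (i : Fin m) :
    IG m f x x' i =
      (x i - x' i) * ∫ t in (0 : ℝ)..1, fderiv ℝ f (x' + t • (x - x')) (Pi.single i 1) := by
  unfold IG
  congr 1
  exact intervalIntegral.integral_congr fun t _ ↦ deriv_comp_update_eq_fderiv (hf _) i

theorem ig_preserves_average_weak_pairwise_monotonicity_general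
    (m : ℕ) (f : (Fin m → ℝ) → ℝ) (β γ : Fin m)
    (hf : ContDiff ℝ 1 f)
    (hmono : ∀ (x : Fin m → ℝ) (c : ℝ), x β = x γ → 0 < c →
      f (Function.update x γ (x γ + c)) ≤ f (Function.update x β (x β + c)))
    (x : Fin m → ℝ) (hx : x β = x γ) (hpos : 0 < x β) :
    (1 / x γ) * IG m f x 0 γ ≤ (1 / x β) * IG m f x 0 β := by
  have hdiff : Differentiable ℝ f := hf.differentiable one_ne_zero
  have hcont (i : Fin m) : Continuous fun t : ℝ ↦ fderiv ℝ f (t • x) (Pi.single i 1) := by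
    have := hf.continuous_fderiv one_ne_zero
    fun_prop
  simp only [IG_eq_integral_fderiv hdiff, Pi.zero_apply, sub_zero, zero_add, ← hx, one_div,
    inv_mul_cancel_left₀ hpos.ne']
  exact intervalIntegral.integral_mono_on zero_le_one ((hcont γ).intervalIntegrable 0 1)
    ((hcont β).intervalIntegrable 0 1) fun t _ ↦
      WeaklyPairwiseMonotone.fderiv_single_le hmono (hdiff _) (congrArg (t • ·) hx)

/-- If `f` is continuously differentiable and weakly pairwise monotonic with respect to
feature `β` over feature `γ` (`β ≠ γ`), then Integrated Gradients with the zero baseline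
preserves average weak pairwise monotonicity: for every explicand `x` with `x_β = x_γ > 0`,
`(1/x_β)·IG_β(x, 0, f) ≥ (1/x_γ)·IG_γ(x, 0, f)`, i.e. `IG_β(x, 0, f) ≥ IG_γ(x, 0, f)`. -/
theorem ig_preserves_average_weak_pairwise_monotonicity
    (m : ℕ) (f : (Fin m → ℝ) → ℝ) (β γ : Fin m) (hβγ : β ≠ γ)
    (hf : ContDiff ℝ 1 f)
    (hmono : ∀ (x : Fin m → ℝ) (c : ℝ), x β = x γ → 0 < c →
      f (Function.update x γ (x γ + c)) ≤ f (Function.update x β (x β + c)))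
    (x : Fin m → ℝ) (hx : x β = x γ) (hpos : 0 < x β) :
    (1 / x γ) * IG m f x 0 γ ≤ (1 / x β) * IG m f x 0 β :=
  ig_preserves_average_weak_pairwise_monotonicity_general m f β γ hf hmono x hx hpos
end

section
/- Let f : ℝ^m → ℝ be weakly pairwise monotonic with respect to feature β over feature γ (β ≠ γ). Then Baseline Shapley with the zero baseline preserves average weak pairwise monotonicity: for every explicand x ∈ ℝ^m with x_β = x_γ > 0, one has (1/x_β) · BS_β(x, 0, f) ≥ (1/x_γ) · BS_γ(x, 0, f), i.e. BS_β(x, 0, f) ≥ BS_γ(x, 0, f). -/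
/-- Reindexing a sum over subsets avoiding `γ` as a sum over subsets avoiding `β`,
by swapping the roles of `β` and `γ`. -/
lemma swap_powerset_sum {m : ℕ} (β γ : Fin m) (hβγ : β ≠ γ) (F : Finset (Fin m) → ℝ) :
    ∑ S ∈ (Finset.univ.erase γ).powerset, F S =
    ∑ S ∈ (Finset.univ.erase β).powerset,
      F (if γ ∈ S then insert β (S.erase γ) else S) := by
  have hsub : ∀ (i : Fin m) (S : Finset (Fin m)),
      S ∈ (Finset.univ.erase i).powerset ↔ i ∉ S := by
    intro i S
    simp [Finset.mem_powerset, Finset.subset_erase]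
  apply Finset.sum_nbij' (i := fun S => if β ∈ S then insert γ (S.erase β) else S)
      (j := fun S => if γ ∈ S then insert β (S.erase γ) else S)
  · intro S hS
    rw [hsub] at hS ⊢
    by_cases hβS : β ∈ S
    · simp [hβS, Finset.mem_insert, hβγ, Finset.mem_erase]
    · simp [hβS]
  · intro S hS
    rw [hsub] at hS ⊢
    by_cases hγS : γ ∈ S
    · simp [hγS, Finset.mem_insert, hβγ.symm, Finset.mem_erase]
    · simp [hγS]
  · intro S hS
    rw [hsub] at hS
    by_cases hβS : β ∈ S
    · have hγe : γ ∉ S.erase β := fun h => hS (Finset.erase_subset _ _ h)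
      rw [if_pos hβS, if_pos (Finset.mem_insert_self _ _), Finset.erase_insert hγe,
        Finset.insert_erase hβS]
    · rw [if_neg hβS, if_neg hS]
  · intro S hS
    rw [hsub] at hS
    by_cases hγS : γ ∈ S
    · have hβe : β ∉ S.erase γ := fun h => hS (Finset.erase_subset _ _ h)
      rw [if_pos hγS, if_pos (Finset.mem_insert_self _ _), Finset.erase_insert hβe,
        Finset.insert_erase hγS]
    · rw [if_neg hγS, if_neg hS]
  · intro S hS
    rw [hsub] at hS
    by_cases hβS : β ∈ S
    · have hγe : γ ∉ S.erase β := fun h => hS (Finset.erase_subset _ _ h)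
      rw [if_pos hβS, if_pos (Finset.mem_insert_self _ _), Finset.erase_insert hγe,
        Finset.insert_erase hβS]
    · rw [if_neg hβS, if_neg hS]

/-- If `f` is weakly pairwise monotonic with respect to feature `β` over feature `γ`
(`β ≠ γ`), then Baseline Shapley with the zero baseline preserves average weak pairwise
monotonicity: for every explicand `x` with `x_β = x_γ > 0`,
`(1/x_β)·BS_β(x, 0, f) ≥ (1/x_γ)·BS_γ(x, 0, f)`, i.e. `BS_β(x, 0, f) ≥ BS_γ(x, 0, f)`. -/
theorem bshap_preserves_average_weak_pairwise_monotonicity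
    (m : ℕ) (f : (Fin m → ℝ) → ℝ) (β γ : Fin m) (hβγ : β ≠ γ)
    (hmono : ∀ (x : Fin m → ℝ) (c : ℝ), x β = x γ → 0 < c →
      f (Function.update x γ (x γ + c)) ≤ f (Function.update x β (x β + c)))
    (x : Fin m → ℝ) (hx : x β = x γ) (hpos : 0 < x β) :
    (1 / x γ) * BS m f x 0 γ ≤ (1 / x β) * BS m f x 0 β := by
  have hxγ : 0 < x γ := hx ▸ hpos
  -- key monotonicity lemma on masked vectors
  have key : ∀ T : Finset (Fin m), β ∉ T → γ ∉ T →
      f (fun j => if j ∈ insert γ T then x j else (0 : Fin m → ℝ) j) ≤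
      f (fun j => if j ∈ insert β T then x j else (0 : Fin m → ℝ) j) := by
    intro T hβT hγT
    set y : Fin m → ℝ := fun j => if j ∈ T then x j else 0 with hy
    have hyβ : y β = 0 := by simp [hy, hβT]
    have hyγ : y γ = 0 := by simp [hy, hγT]
    have h := hmono y (x β) (by rw [hyβ, hyγ]) hpos
    have e1 : Function.update y γ (y γ + x β) =
        (fun j => if j ∈ insert γ T then x j else (0 : Fin m → ℝ) j) := by
      funext j
      by_cases hj : j = γ
      · subst hj; simp [Function.update, hyγ, hx]
      · simp [Function.update, hj, hy, Finset.mem_insert]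
    have e2 : Function.update y β (y β + x β) =
        (fun j => if j ∈ insert β T then x j else (0 : Fin m → ℝ) j) := by
      funext j
      by_cases hj : j = β
      · subst hj; simp [Function.update, hyβ]
      · simp [Function.update, hj, hy, Finset.mem_insert]
    rw [e1, e2] at h
    exact h
  rw [hx]
  apply mul_le_mul_of_nonneg_left _ (by positivity : (0:ℝ) ≤ 1 / x γ)
  unfold BS
  rw [swap_powerset_sum β γ hβγ]
  apply Finset.sum_le_sum
  intro S hS
  have hS' : β ∉ S := by
    simpa [Finset.mem_powerset, Finset.subset_erase] using hS
  by_cases hγS : γ ∈ S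
  · set T := S.erase γ with hT
    have hβT : β ∉ T := fun h => hS' (Finset.erase_subset _ _ h)
    have hγT : γ ∉ T := Finset.notMem_erase _ _
    rw [if_pos hγS]
    have hcard : (insert β T).card = S.card := by
      rw [Finset.card_insert_of_notMem hβT, hT, Finset.card_erase_of_mem hγS]
      have : 0 < S.card := Finset.card_pos.mpr ⟨γ, hγS⟩
      omega
    rw [hcard]
    have hcomm : insert γ (insert β T) = insert β S := by
      rw [Finset.insert_comm, hT, Finset.insert_erase hγS]
    rw [hcomm]
    apply mul_le_mul_of_nonneg_left _ (by positivity)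
    apply sub_le_sub_left
    have hk := key T hβT hγT
    rwa [hT, Finset.insert_erase hγS] at hk
  · rw [if_neg hγS]
    apply mul_le_mul_of_nonneg_left _ (by positivity)
    apply sub_le_sub_right
    exact key S hS' hγS
end

section
/- Let f : ℝ^m → ℝ be continuously differentiable and strongly pairwise monotonic with respect to feature β over feature γ (β ≠ γ). Then Integrated Gradients preserves average strong pairwise monotonicity: for every baseline x' ∈ ℝ^m and explicand x ∈ ℝ^m with x_β > x'_β and x_γ > x'_γ, one has IG_β(x, x', f)/(x_β − x'_β) ≥ IG_γ(x, x', f)/(x_γ − x'_γ). -/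
open Filter Set Topology

theorem HasDerivAt.le_of_eventually_le_right {g h : ℝ → ℝ} {g' h' a : ℝ}
    (hg : HasDerivAt g g' a) (hh : HasDerivAt h h' a) (ha : g a = h a)
    (hle : ∀ᶠ c in 𝓝[>] a, g c ≤ h c) : g' ≤ h' := by
  have hslope : Tendsto (slope (h - g) a) (𝓝[>] a) (𝓝 (h' - g')) :=
    (hasDerivWithinAt_iff_tendsto_slope' self_notMem_Ioi).mp (hh.sub hg).hasDerivWithinAt
  have hnonneg : ∀ᶠ c in 𝓝[>] a, 0 ≤ slope (h - g) a c := by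
    filter_upwards [hle, self_mem_nhdsWithin] with c hc (hac : a < c)
    rw [slope_def_field, Pi.sub_apply, Pi.sub_apply, ha, sub_self, sub_zero]
    exact div_nonneg (sub_nonneg.mpr hc) (sub_nonneg.mpr hac.le)
  exact sub_nonneg.mp (ge_of_tendsto hslope hnonneg)

section Partial

variable {𝕜 ι F : Type*} [NontriviallyNormedField 𝕜] [Fintype ι] [DecidableEq ι]
  [NormedAddCommGroup F] [NormedSpace 𝕜 F]

theorem HasFDerivAt.hasDerivAt_update {f : (ι → 𝕜) → F} {f' : (ι → 𝕜) →L[𝕜] F} {z : ι → 𝕜}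
    (hf : HasFDerivAt f f' z) (i : ι) :
    HasDerivAt (fun s => f (Function.update z i s)) (f' (Pi.single i 1)) (z i) := by
  have hf' : HasFDerivAt f f' (Function.update z i (z i)) := by rwa [Function.update_eq_self]
  exact hf'.comp_hasDerivAt (z i) (_root_.hasDerivAt_update z i (z i))

theorem DifferentiableAt.deriv_update_apply_self {f : (ι → 𝕜) → F} {z : ι → 𝕜}
    (hf : DifferentiableAt 𝕜 f z) (i : ι) :
    deriv (fun s => f (Function.update z i s)) (z i) = fderiv 𝕜 f z (Pi.single i 1) :=
  (hf.hasFDerivAt.hasDerivAt_update i).deriv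

end Partial

theorem fderiv_single_le_of_update_add_le {ι : Type*} [Fintype ι] [DecidableEq ι]
    {f : (ι → ℝ) → ℝ} {z : ι → ℝ} (hf : DifferentiableAt ℝ f z) {β γ : ι}
    (hmono : ∀ c > 0, f (Function.update z γ (z γ + c)) ≤ f (Function.update z β (z β + c))) :
    fderiv ℝ f z (Pi.single γ 1) ≤ fderiv ℝ f z (Pi.single β 1) := by
  have hshift : ∀ i, HasDerivAt (fun c => f (Function.update z i (z i + c)))
      (fderiv ℝ f z (Pi.single i 1)) 0 := fun i =>
    HasDerivAt.comp_const_add (z i) 0 (by simpa using hf.hasFDerivAt.hasDerivAt_update i)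
  exact (hshift γ).le_of_eventually_le_right (hshift β) (by simp)
    (eventually_nhdsWithin_of_forall hmono)

theorem IG_eq_mul_integral_fderiv {m : ℕ} {f : (Fin m → ℝ) → ℝ} (hf : Differentiable ℝ f)
    (x x' : Fin m → ℝ) (i : Fin m) :
    IG m f x x' i =
      (x i - x' i) * ∫ t in (0:ℝ)..1, fderiv ℝ f (x' + t • (x - x')) (Pi.single i 1) :=
  congrArg _ <| intervalIntegral.integral_congr fun _ _ => (hf _).deriv_update_apply_self i

theorem ig_preserves_average_strong_pairwise_monotonicity_general
    (m : ℕ) (f : (Fin m → ℝ) → ℝ) (β γ : Fin m)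
    (hf : ContDiff ℝ 1 f)
    (hmono : ∀ (x : Fin m → ℝ) (c : ℝ), 0 < c →
      f (Function.update x γ (x γ + c)) ≤ f (Function.update x β (x β + c)))
    (x x' : Fin m → ℝ) (hβ : x' β < x β) (hγ : x' γ < x γ) :
    IG m f x x' γ / (x γ - x' γ) ≤ IG m f x x' β / (x β - x' β) := by
  have hdiff : Differentiable ℝ f := hf.differentiable one_ne_zero
  rw [IG_eq_mul_integral_fderiv hdiff, IG_eq_mul_integral_fderiv hdiff,
    mul_div_cancel_left₀ _ (sub_pos.mpr hγ).ne', mul_div_cancel_left₀ _ (sub_pos.mpr hβ).ne']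
  have hcont : ∀ i, Continuous fun t : ℝ => fderiv ℝ f (x' + t • (x - x')) (Pi.single i 1) :=
    fun i => ((hf.continuous_fderiv one_ne_zero).comp (by fun_prop)).clm_apply continuous_const
  exact intervalIntegral.integral_mono_on zero_le_one ((hcont γ).intervalIntegrable 0 1)
    ((hcont β).intervalIntegrable 0 1)
    fun t _ => fderiv_single_le_of_update_add_le (hdiff _) (hmono _)

/-- If `f` is continuously differentiable and strongly pairwise monotonic with respect to
feature `β` over feature `γ` (`β ≠ γ`), then Integrated Gradients preserves average strong
pairwise monotonicity: for every baseline `x'` and explicand `x` with `x_β > x'_β` and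
`x_γ > x'_γ`, one has `IG_β(x, x', f)/(x_β − x'_β) ≥ IG_γ(x, x', f)/(x_γ − x'_γ)`. -/
theorem ig_preserves_average_strong_pairwise_monotonicity
    (m : ℕ) (f : (Fin m → ℝ) → ℝ) (β γ : Fin m) (hβγ : β ≠ γ)
    (hf : ContDiff ℝ 1 f)
    (hmono : ∀ (x : Fin m → ℝ) (c : ℝ), 0 < c →
      f (Function.update x γ (x γ + c)) ≤ f (Function.update x β (x β + c)))
    (x x' : Fin m → ℝ) (hβ : x' β < x β) (hγ : x' γ < x γ) :
    IG m f x x' γ / (x γ - x' γ) ≤ IG m f x x' β / (x β - x' β) :=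
  ig_preserves_average_strong_pairwise_monotonicity_general m f β γ hf hmono x x' hβ hγ
end

section
/- Let f(x_1, x_2) = x_1 x_2/(x_1 + x_2) for x_1 + x_2 > 0 (extended by f(0,0) = 0). Then for all x_1, x_2 > 0, the Integrated Gradients attribution of the first feature at explicand (x_1, x_2) with baseline (0, 0) satisfies IG_1((x_1, x_2), (0, 0), f) = x_1 x_2² / (x_1 + x_2)². -/
/-- The model `f(x₁, x₂) = x₁x₂/(x₁ + x₂)` for `x₁ + x₂ > 0`, extended by `f(0,0) = 0`
(in Lean, division by zero yields zero, so the formula already gives `f 0 0 = 0`). -/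
noncomputable def f (a b : ℝ) : ℝ := a * b / (a + b)

lemma deriv_f (a b : ℝ) (hab : 0 < a + b) :
    deriv (fun s : ℝ => f s b) a = b ^ 2 / (a + b) ^ 2 := by
  have h : HasDerivAt (fun s : ℝ => s * b / (s + b))
      ((1 * b * (a + b) - a * b * 1) / (a + b) ^ 2) a :=
    ((hasDerivAt_id a).mul_const b).div ((hasDerivAt_id a).add_const b) (ne_of_gt hab)
  have := h.deriv
  simp only [f]
  rw [this]
  field_simp
  ring

/-- For all `x₁, x₂ > 0`, the Integrated Gradients attribution of the first feature at
explicand `(x₁, x₂)` with baseline `(0, 0)`, namely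
`IG₁ = (x₁ − 0) · ∫_0^1 (∂f/∂x₁)(t·x₁, t·x₂) dt`, equals `x₁x₂²/(x₁ + x₂)²`. -/
theorem ig_first_feature_formula (x₁ x₂ : ℝ) (h₁ : 0 < x₁) (h₂ : 0 < x₂) :
    (x₁ - 0) * ∫ t in (0:ℝ)..1, deriv (fun s : ℝ => f s (0 + t * (x₂ - 0))) (0 + t * (x₁ - 0))
      = x₁ * x₂ ^ 2 / (x₁ + x₂) ^ 2 := by
  have hsum : 0 < x₁ + x₂ := by linarith
  have key : ∫ t in (0:ℝ)..1, deriv (fun s : ℝ => f s (0 + t * (x₂ - 0))) (0 + t * (x₁ - 0))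
      = ∫ _t in (0:ℝ)..1, x₂ ^ 2 / (x₁ + x₂) ^ 2 := by
    apply intervalIntegral.integral_congr_ae
    filter_upwards with t ht
    rw [Set.uIoc_of_le (by norm_num : (0:ℝ) ≤ 1)] at ht
    have ht0 : 0 < t := ht.1
    have hab : 0 < 0 + t * (x₁ - 0) + (0 + t * (x₂ - 0)) := by
      simp only [sub_zero, zero_add]
      nlinarith
    rw [deriv_f _ _ hab]
    simp only [sub_zero, zero_add]
    rw [show t * x₁ + t * x₂ = t * (x₁ + x₂) by ring, mul_pow, mul_pow]
    rw [mul_div_mul_left _ _ (by positivity : (t:ℝ)^2 ≠ 0)]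
  rw [key]
  simp only [intervalIntegral.integral_const, smul_eq_mul, sub_zero]
  field_simp
end

section
/- Integrated Gradients does not preserve demand individual monotonicity: for f(x_1, x_2) = x_1 x_2/(x_1 + x_2) on the positive quadrant (extended by f(0,0) = 0), f is individually monotonic with respect to x_1 on (0, ∞)², yet with baseline (0, 0) one has IG_1((3, 1), (0, 0), f) = 3/16 < 1/4 = IG_1((1, 1), (0, 0), f), even though the explicand (3, 1) is obtained from (1, 1) by increasing only the first coordinate. -/
lemma f_le_f_left {a a' b : ℝ} (ha : 0 < a) (hb : 0 ≤ b) (h : a ≤ a') : f a b ≤ f a' b := by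
  unfold f
  rw [div_le_div_iff₀ (by positivity) (by linarith)]
  nlinarith [mul_nonneg (mul_nonneg hb hb) (sub_nonneg.2 h)]

lemma hasDerivAt_f_left {a b : ℝ} (hab : a + b ≠ 0) :
    HasDerivAt (fun s => f s b) (b ^ 2 / (a + b) ^ 2) a := by
  refine (((hasDerivAt_id' a).mul_const b).div ((hasDerivAt_id' a).add_const b) hab).congr_deriv ?_
  ring

lemma deriv_f_left_along_ray {x y t : ℝ} (hxy : x + y ≠ 0) (ht : t ≠ 0) :
    deriv (fun s => f s (t * y)) (t * x) = y ^ 2 / (x + y) ^ 2 := by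
  rw [(hasDerivAt_f_left (by rw [← mul_add]; exact mul_ne_zero ht hxy)).deriv]
  field_simp

lemma integratedGradient_f_left_zero_baseline {x y : ℝ} (hxy : x + y ≠ 0) :
    (x - 0) * ∫ t in (0:ℝ)..1, deriv (fun s => f s (0 + t * (y - 0))) (0 + t * (x - 0)) =
      x * y ^ 2 / (x + y) ^ 2 := by
  have hconst : ∫ t in (0:ℝ)..1, deriv (fun s => f s (0 + t * (y - 0))) (0 + t * (x - 0)) =
      ∫ _ in (0:ℝ)..1, y ^ 2 / (x + y) ^ 2 := by
    refine intervalIntegral.integral_congr_ae (Filter.Eventually.of_forall fun t ht => ?_)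
    rw [Set.uIoc_of_le zero_le_one] at ht
    simp only [sub_zero, zero_add]
    exact deriv_f_left_along_ray hxy ht.1.ne'
  rw [hconst, intervalIntegral.integral_const]
  simp only [sub_zero, smul_eq_mul, one_mul]
  ring

/-- Integrated Gradients does not preserve demand individual monotonicity: `f` is
individually monotonic with respect to the first feature on `(0,∞)²`, yet with baseline
`(0,0)` one has `IG₁((3,1),(0,0),f) = 3/16 < 1/4 = IG₁((1,1),(0,0),f)`, even though the
explicand `(3,1)` is obtained from `(1,1)` by increasing only the first coordinate.
Here `IG₁((x₁,x₂),(0,0),f) = (x₁ − 0) · ∫_0^1 (∂f/∂x₁)(t·x₁, t·x₂) dt`. -/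
theorem ig_fails_demand_individual_monotonicity :
    (∀ a a' b : ℝ, 0 < a → 0 < a' → 0 < b → a ≤ a' → f a b ≤ f a' b) ∧
    ((3 - 0 : ℝ) * ∫ t in (0:ℝ)..1,
        deriv (fun s : ℝ => f s (0 + t * (1 - 0))) (0 + t * (3 - 0))) = 3 / 16 ∧
    ((1 - 0 : ℝ) * ∫ t in (0:ℝ)..1,
        deriv (fun s : ℝ => f s (0 + t * (1 - 0))) (0 + t * (1 - 0))) = 1 / 4 ∧
    (3 / 16 : ℝ) < 1 / 4 := by
  refine ⟨fun a a' b ha _ hb h => f_le_f_left ha hb.le h, ?_, ?_, by norm_num⟩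
  · rw [integratedGradient_f_left_zero_baseline (by norm_num)]
    norm_num
  · rw [integratedGradient_f_left_zero_baseline (by norm_num)]
    norm_num
end
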